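/- arXiv:2507.03900 — 3 statements merged into one kernel-verified Lean document; each statement's English description precedes it below -/
import Mathlib

section
/- Let (Ω, ℙ) be a probability space and Z : Ω → ℝ an integrable random variable. Define g : ℝ → ℝ by g q := E[min (Z − q, 0)]. Then for every q₀ ∈ ℝ, g has derivative −ℙ({ω | Z ω ≤ q₀}).toReal within [q₀, ∞) at q₀ (right derivative) and derivative −ℙ({ω | Z ω < q₀}).toReal within (−∞, q₀] at q₀ (left derivative). -/
/-!
The slopes of `q ↦ min (z - q) 0` are bounded by `1`, since `min · 0` is `1`-Lipschitz, and converge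
to the one-sided derivatives of this piecewise linear function: `-1` on `{z ≤ q₀}` from the right
and on `{z < q₀}` from the left, `0` elsewhere. Dominated convergence lets the slope limit pass under
the expectation, turning these indicators into the probabilities `ℙ(Z ≤ q₀)` and `ℙ(Z < q₀)`.
-/

open MeasureTheory Filter Set Topology

theorem LipschitzWith.norm_slope_le {𝕜 E : Type*} [NormedField 𝕜] [SeminormedAddCommGroup E]
    [NormedSpace 𝕜 E] {f : 𝕜 → E} {K : NNReal} (hf : LipschitzWith K f) (a b : 𝕜) :
    ‖slope f a b‖ ≤ K := by
  rcases eq_or_ne b a with rfl | hba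
  · simp
  rw [slope_def_module, norm_smul, norm_inv, inv_mul_le_iff₀ (norm_pos_iff.2 (sub_ne_zero.2 hba))]
  simpa [mul_comm] using hf.norm_sub_le b a

theorem hasDerivWithinAt_integral_of_lipschitzWith {Ω E : Type*} [MeasurableSpace Ω]
    {μ : Measure Ω} [IsFiniteMeasure μ] [NormedAddCommGroup E] [NormedSpace ℝ E] [CompleteSpace E]
    {F : ℝ → Ω → E} {F' : Ω → E} {K : NNReal}
    {s : Set ℝ} {x₀ : ℝ} (hF_int : ∀ x, Integrable (F x) μ)
    (hF_lip : ∀ᵐ ω ∂μ, LipschitzWith K (F · ω))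
    (hF' : ∀ᵐ ω ∂μ, HasDerivWithinAt (F · ω) (F' ω) s x₀) :
    HasDerivWithinAt (fun x => ∫ ω, F x ω ∂μ) (∫ ω, F' ω ∂μ) s x₀ := by
  have slope_integral : slope (fun x => ∫ ω, F x ω ∂μ) x₀ = fun x => ∫ ω, slope (F · ω) x₀ x ∂μ := by
    ext x
    simp only [slope_def_module, integral_smul, integral_sub (hF_int x) (hF_int x₀)]
  rw [hasDerivWithinAt_iff_tendsto_slope, slope_integral]
  refine tendsto_integral_filter_of_dominated_convergence (fun _ => K)
    (Eventually.of_forall fun x => ?_) (Eventually.of_forall fun x => ?_) (integrable_const _) ?_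
  · simp only [slope_def_module]
    exact ((hF_int x).sub (hF_int x₀)).aestronglyMeasurable.const_smul _
  · filter_upwards [hF_lip] with ω hω using hω.norm_slope_le x₀ x
  · filter_upwards [hF'] with ω hω using hasDerivWithinAt_iff_tendsto_slope.1 hω

theorem integral_indicator_one_comp {Ω α : Type*} [MeasurableSpace Ω] [MeasurableSpace α]
    {μ : Measure Ω} {Z : Ω → α} (hZ : AEMeasurable Z μ) {s : Set α} (hs : MeasurableSet s) :
    ∫ ω, s.indicator 1 (Z ω) ∂μ = μ.real (Z ⁻¹' s) := by
  simp_rw [← indicator_comp_right (g := 1) Z]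
  rw [integral_indicator₀ (hZ.nullMeasurableSet_preimage hs), Pi.one_comp]
  simp only [Pi.one_apply, setIntegral_const, smul_eq_mul, mul_one]

theorem lipschitzWith_min_sub_zero (z : ℝ) : LipschitzWith 1 fun q : ℝ => min (z - q) 0 := by
  refine LipschitzWith.min_const (LipschitzWith.of_dist_le_mul fun a b => ?_) 0
  rw [NNReal.coe_one, one_mul, Real.dist_eq, Real.dist_eq, sub_sub_sub_cancel_left,
    abs_sub_comm]

theorem hasDerivWithinAt_min_sub_zero_Ici (z x : ℝ) :
    HasDerivWithinAt (fun q => min (z - q) 0) (-(Iic x).indicator 1 z) (Ici x) x := by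
  rcases le_or_gt z x with hz | hz
  · rw [indicator_of_mem (mem_Iic.2 hz), Pi.one_apply]
    exact ((hasDerivAt_id x).const_sub z).hasDerivWithinAt.congr
      (fun q hq => min_eq_left (by linarith [mem_Ici.1 hq])) (min_eq_left (by linarith))
  · rw [indicator_of_notMem (notMem_Iic.2 hz), neg_zero]
    refine (hasDerivWithinAt_const x _ 0).congr_of_eventuallyEq ?_ (min_eq_right (by linarith))
    filter_upwards [nhdsWithin_le_nhds (gt_mem_nhds hz)] with q hq
    exact min_eq_right (by linarith)

theorem hasDerivWithinAt_min_sub_zero_Iic (z x : ℝ) :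
    HasDerivWithinAt (fun q => min (z - q) 0) (-(Iio x).indicator 1 z) (Iic x) x := by
  rcases lt_or_ge z x with hz | hz
  · rw [indicator_of_mem (mem_Iio.2 hz), Pi.one_apply]
    refine ((hasDerivAt_id x).const_sub z).hasDerivWithinAt.congr_of_eventuallyEq ?_
      (min_eq_left (by linarith))
    filter_upwards [nhdsWithin_le_nhds (lt_mem_nhds hz)] with q hq
    exact min_eq_left (by linarith)
  · rw [indicator_of_notMem (notMem_Iio.2 hz), neg_zero]
    exact (hasDerivWithinAt_const x _ 0).congr
      (fun q hq => min_eq_right (by linarith [mem_Iic.1 hq])) (min_eq_right (by linarith))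

/-- One-sided derivative computation underlying the subgradient formula of
Theorem 2: `q ↦ E[(Z − q)⁻]` has right derivative `−P(Z ≤ q₀)` and left
derivative `−P(Z < q₀)` at every `q₀`. -/
theorem stmt_7 {Ω : Type*} [MeasurableSpace Ω] (P : Measure Ω)
    [IsProbabilityMeasure P] (Z : Ω → ℝ) (hZ : Integrable Z P) (q₀ : ℝ) :
    HasDerivWithinAt (fun q : ℝ => ∫ ω, min (Z ω - q) 0 ∂P)
        (-(P {ω | Z ω ≤ q₀}).toReal) (Set.Ici q₀) q₀ ∧
      HasDerivWithinAt (fun q : ℝ => ∫ ω, min (Z ω - q) 0 ∂P)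
        (-(P {ω | Z ω < q₀}).toReal) (Set.Iic q₀) q₀ := by
  have hint (q : ℝ) : Integrable (fun ω => min (Z ω - q) 0) P :=
    (hZ.sub (integrable_const q)).inf (integrable_const 0)
  have hlip := ae_of_all P fun ω => lipschitzWith_min_sub_zero (Z ω)
  have hZm := hZ.aemeasurable
  constructor
  · have := hasDerivWithinAt_integral_of_lipschitzWith hint hlip
      (ae_of_all P fun ω => hasDerivWithinAt_min_sub_zero_Ici (Z ω) q₀)
    rwa [integral_neg, integral_indicator_one_comp hZm measurableSet_Iic] at this
  · have := hasDerivWithinAt_integral_of_lipschitzWith hint hlip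
      (ae_of_all P fun ω => hasDerivWithinAt_min_sub_zero_Iic (Z ω) q₀)
    rwa [integral_neg, integral_indicator_one_comp hZm measurableSet_Iio] at this
end

section
/- Let (Ω, ℙ) be a probability space, Z : Ω → ℝ an integrable random variable, and τ ∈ (0, 1). A point q* ∈ ℝ satisfies g_τ q ≤ g_τ q* for all q ∈ ℝ, where g_τ q := q + (1/τ) * E[min (Z − q, 0)], if and only if ℙ({ω | Z ω < q*}).toReal ≤ τ ≤ ℙ({ω | Z ω ≤ q*}).toReal. -/
open MeasureTheory

/-!
The function `φ q = E[min (Z - q) 0]` has difference quotients squeezed between the two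
distribution functions: for `q₁ ≤ q₂`,
`(q₂ - q₁) P(Z ≤ q₁) ≤ φ q₁ - φ q₂ ≤ (q₂ - q₁) P(Z < q₂)`.
Hence `q ↦ τ q + φ q` is maximal at `q*` exactly when `P(Z ≤ q) ≤ τ` for `q < q*` and
`τ ≤ P(Z < q)` for `q > q*`, and continuity of `P` along `{Z ≤ q* - 1/(n+1)}` and
`{Z < q* + 1/(n+1)}` turns these into `P(Z < q*) ≤ τ ≤ P(Z ≤ q*)`.
-/

namespace MeasureTheory

variable {Ω : Type*} [MeasurableSpace Ω] {P : Measure Ω} {Z : Ω → ℝ}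

lemma Integrable.min_sub_const_zero [IsFiniteMeasure P] (hZ : Integrable Z P) (q : ℝ) :
    Integrable (fun ω => min (Z ω - q) 0) P :=
  (hZ.sub (integrable_const q)).inf (integrable_const 0)

lemma measureReal_lt_le_of_forall_lt [IsFiniteMeasure P] {a c : ℝ}
    (h : ∀ q < a, P.real {ω | Z ω ≤ q} ≤ c) : P.real {ω | Z ω < a} ≤ c := by
  have hpos (n : ℕ) : (0 : ℝ) < 1 / (n + 1) := Nat.one_div_pos_of_nat
  set s : ℕ → Set Ω := fun n => {ω | Z ω ≤ a - 1 / (n + 1)}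
  have hs : Monotone s := fun m n hmn ω (hω : Z ω ≤ _) => by
    have : (1 : ℝ) / (n + 1) ≤ 1 / (m + 1) := Nat.one_div_le_one_div hmn
    exact hω.trans (by linarith)
  have hU : ⋃ n, s n = {ω | Z ω < a} := by
    ext ω
    simp only [s, Set.mem_iUnion, Set.mem_ofPred_eq]
    refine ⟨fun ⟨n, hn⟩ => hn.trans_lt (by linarith [hpos n]), fun hω => ?_⟩
    obtain ⟨n, hn⟩ := exists_nat_one_div_lt (sub_pos.mpr hω)
    exact ⟨n, by linarith⟩
  have hlim := (ENNReal.tendsto_toReal (measure_ne_top P _)).comp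
    (tendsto_measure_iUnion_atTop (μ := P) hs)
  rw [hU] at hlim
  exact le_of_tendsto hlim (Filter.Eventually.of_forall fun n => h _ (by linarith [hpos n]))

lemma le_measureReal_le_of_forall_gt [IsFiniteMeasure P] (hZ : AEMeasurable Z P)
    {a c : ℝ} (h : ∀ q > a, c ≤ P.real {ω | Z ω < q}) : c ≤ P.real {ω | Z ω ≤ a} := by
  have hpos (n : ℕ) : (0 : ℝ) < 1 / (n + 1) := Nat.one_div_pos_of_nat
  set s : ℕ → Set Ω := fun n => {ω | Z ω < a + 1 / (n + 1)}
  have hs : Antitone s := fun m n hmn ω (hω : Z ω < _) => by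
    have : (1 : ℝ) / (n + 1) ≤ 1 / (m + 1) := Nat.one_div_le_one_div hmn
    exact hω.trans_le (by linarith)
  have hI : ⋂ n, s n = {ω | Z ω ≤ a} := by
    ext ω
    simp only [s, Set.mem_iInter, Set.mem_ofPred_eq]
    refine ⟨fun hω => le_of_forall_pos_lt_add fun ε hε => ?_,
      fun hω n => hω.trans_lt (by linarith [hpos n])⟩
    obtain ⟨n, hn⟩ := exists_nat_one_div_lt hε
    linarith [hω n]
  have hlim := (ENNReal.tendsto_toReal (measure_ne_top P _)).comp
    (tendsto_measure_iInter_atTop (μ := P)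
      (fun n => nullMeasurableSet_lt hZ aemeasurable_const) hs ⟨0, measure_ne_top P _⟩)
  rw [hI] at hlim
  exact ge_of_tendsto hlim (Filter.Eventually.of_forall fun n => h _ (by linarith [hpos n]))

lemma sub_mul_measureReal_le_integral_min_sub [IsFiniteMeasure P] (hZ : Integrable Z P)
    {q₁ q₂ : ℝ} (hq : q₁ ≤ q₂) :
    (q₂ - q₁) * P.real {ω | Z ω ≤ q₁} ≤
      ∫ ω, min (Z ω - q₁) 0 ∂P - ∫ ω, min (Z ω - q₂) 0 ∂P := by
  have hs := nullMeasurableSet_le hZ.aemeasurable (aemeasurable_const (b := q₁))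
  rw [← integral_sub (hZ.min_sub_const_zero q₁) (hZ.min_sub_const_zero q₂), mul_comm,
    ← smul_eq_mul, ← setIntegral_const, ← integral_indicator₀ hs]
  refine integral_mono ((integrable_const _).indicator₀ hs)
    ((hZ.min_sub_const_zero q₁).sub (hZ.min_sub_const_zero q₂)) fun ω => ?_
  simp only [Set.indicator_apply, Set.mem_ofPred_eq, min_def]
  split_ifs <;> linarith

lemma integral_min_sub_le_sub_mul_measureReal [IsFiniteMeasure P] (hZ : Integrable Z P)
    {q₁ q₂ : ℝ} (hq : q₁ ≤ q₂) :
    ∫ ω, min (Z ω - q₁) 0 ∂P - ∫ ω, min (Z ω - q₂) 0 ∂P ≤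
      (q₂ - q₁) * P.real {ω | Z ω < q₂} := by
  have hs := nullMeasurableSet_lt hZ.aemeasurable (aemeasurable_const (b := q₂))
  rw [← integral_sub (hZ.min_sub_const_zero q₁) (hZ.min_sub_const_zero q₂), mul_comm,
    ← smul_eq_mul, ← setIntegral_const, ← integral_indicator₀ hs]
  refine integral_mono ((hZ.min_sub_const_zero q₁).sub (hZ.min_sub_const_zero q₂))
    ((integrable_const _).indicator₀ hs) fun ω => ?_
  simp only [Set.indicator_apply, Set.mem_ofPred_eq, min_def]
  split_ifs <;> linarith

end MeasureTheory

theorem stmt_9_general {Ω : Type*} [MeasurableSpace Ω] (P : Measure Ω)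
    [IsProbabilityMeasure P] (Z : Ω → ℝ) (hZ : Integrable Z P)
    (τ : ℝ) (hτ0 : 0 < τ) (qstar : ℝ) :
    (∀ q : ℝ, q + (1 / τ) * ∫ ω, min (Z ω - q) 0 ∂P ≤
        qstar + (1 / τ) * ∫ ω, min (Z ω - qstar) 0 ∂P) ↔
      ((P {ω | Z ω < qstar}).toReal ≤ τ ∧ τ ≤ (P {ω | Z ω ≤ qstar}).toReal) := by
  have hscale : ∀ x, τ * (1 / τ * x) = x := fun x => by field_simp
  have hgap : ∀ q : ℝ, q + (1 / τ) * ∫ ω, min (Z ω - q) 0 ∂P ≤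
        qstar + (1 / τ) * ∫ ω, min (Z ω - qstar) 0 ∂P ↔
      ∫ ω, min (Z ω - q) 0 ∂P - ∫ ω, min (Z ω - qstar) 0 ∂P ≤ τ * (qstar - q) := by
    intro q
    rw [← mul_le_mul_iff_right₀ hτ0, mul_add, mul_add, hscale, hscale]
    constructor <;> intro h <;> linarith
  rw [forall_congr' hgap, ← measureReal_def, ← measureReal_def]
  constructor
  · intro hmax
    refine ⟨measureReal_lt_le_of_forall_lt fun q hq => ?_,
      le_measureReal_le_of_forall_gt hZ.aemeasurable fun q hq => ?_⟩
    · have := (sub_mul_measureReal_le_integral_min_sub hZ hq.le).trans (hmax q)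
      exact le_of_mul_le_mul_left (by linarith) (sub_pos.2 hq)
    · have := integral_min_sub_le_sub_mul_measureReal hZ hq.le
      exact le_of_mul_le_mul_left (by linarith [hmax q]) (sub_pos.2 hq)
  · rintro ⟨hlt, hle⟩ q
    rcases le_total q qstar with hq | hq
    · have := integral_min_sub_le_sub_mul_measureReal hZ hq
      linarith [mul_le_mul_of_nonneg_left hlt (sub_nonneg.2 hq)]
    · have := sub_mul_measureReal_le_integral_min_sub hZ hq
      linarith [mul_le_mul_of_nonneg_left hle (sub_nonneg.2 hq)]

/-- Rockafellar–Uryasev characterization used in Theorem 2: `q*` maximizes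
`g_τ q = q + (1/τ) E[(Z − q)⁻]` over `ℝ` iff `q*` is a `τ`-quantile of `Z`,
i.e. `P(Z < q*) ≤ τ ≤ P(Z ≤ q*)`. -/
theorem stmt_9 {Ω : Type*} [MeasurableSpace Ω] (P : Measure Ω)
    [IsProbabilityMeasure P] (Z : Ω → ℝ) (hZ : Integrable Z P)
    (τ : ℝ) (hτ0 : 0 < τ) (hτ1 : τ < 1) (qstar : ℝ) :
    (∀ q : ℝ, q + (1 / τ) * ∫ ω, min (Z ω - q) 0 ∂P ≤
        qstar + (1 / τ) * ∫ ω, min (Z ω - qstar) 0 ∂P) ↔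
      ((P {ω | Z ω < qstar}).toReal ≤ τ ∧ τ ≤ (P {ω | Z ω ≤ qstar}).toReal) :=
  stmt_9_general P Z hZ τ hτ0 qstar
end

section
/- Let (Ω, ℙ) be a probability space, Z : Ω → ℝ an integrable random variable, N ≥ 1, w : Fin N → ℝ with w i > 0 for all i, and τ : Fin N → ℝ with τ i ∈ (0, 1) for all i. For q : Fin N → ℝ define H q := E[∑ i, w i * (q i + (1/τ i) * min (Z − q i, 0))]. Then q* : Fin N → ℝ satisfies H q ≤ H q* for all q : Fin N → ℝ if and only if for every i, ℙ({ω | Z ω < q* i}).toReal ≤ τ i ≤ ℙ({ω | Z ω ≤ q* i}).toReal, i.e. every q* i is a τ i-quantile of Z. -/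
/-!
The objective separates over coordinates, so with positive weights `q*` is a maximizer iff each
`q* i` maximizes `u ↦ u + τ⁻¹ E[(Z - u)⁻]`. For `s ≤ u` the difference `(x - u)⁻ - (x - s)⁻`
is at least `-(u - s) 1{x < u}` and at most `-(u - s) 1{x ≤ s}`, so the slope of this function
between `s` and `u` lies between `1 - P(Z < u)/τ` and `1 - P(Z ≤ s)/τ`. Hence `t` is a maximizer
iff `P(Z ≤ s) ≤ τ` for all `s < t` and `τ ≤ P(Z < s)` for all `s > t`, and taking the left and
right limits of the distribution function at `t` turns this into `P(Z < t) ≤ τ ≤ P(Z ≤ t)`.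
-/

open MeasureTheory ProbabilityTheory Set

theorem forall_sum_apply_le_iff {ι α β : Type*} [Fintype ι] [AddCommGroup β] [PartialOrder β]
    [IsOrderedAddMonoid β] (f : ι → α → β) (x : ι → α) :
    (∀ y : ι → α, ∑ i, f i (y i) ≤ ∑ i, f i (x i)) ↔ ∀ i a, f i a ≤ f i (x i) := by
  classical
  refine ⟨fun h i a => ?_, fun h y => Finset.sum_le_sum fun i _ => h i (y i)⟩
  have := h (Function.update x i a)
  simp only [Function.apply_update f x i a] at this
  rwa [Finset.sum_update_of_mem (Finset.mem_univ i),
    Finset.sum_eq_add_sum_sdiff_singleton_of_mem (Finset.mem_univ i), add_le_add_iff_right] at this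

noncomputable def quantileObjective (μ : Measure ℝ) (τ u : ℝ) : ℝ :=
  u + 1 / τ * ∫ x, min (x - u) 0 ∂μ

lemma integrable_min_sub_zero {Ω : Type*} [MeasurableSpace Ω] {P : Measure Ω} [IsFiniteMeasure P]
    {Z : Ω → ℝ} (hZ : Integrable Z P) (u : ℝ) : Integrable (fun ω => min (Z ω - u) 0) P :=
  (hZ.sub (integrable_const u)).inf (integrable_zero Ω ℝ P)

lemma indicator_Iio_le_min_sub_zero_sub {s u : ℝ} (hsu : s ≤ u) (x : ℝ) :
    (Iio u).indicator (fun _ => s - u) x ≤ min (x - u) 0 - min (x - s) 0 := by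
  by_cases hx : x < u
  · rw [indicator_of_mem (mem_Iio.2 hx), min_eq_left (by linarith)]
    linarith [min_le_left (x - s) 0]
  · rw [indicator_of_notMem (mt mem_Iio.1 hx), min_eq_right (by linarith),
      min_eq_right (by linarith), sub_zero]

lemma min_sub_zero_sub_le_indicator_Iic {s u : ℝ} (hsu : s ≤ u) (x : ℝ) :
    min (x - u) 0 - min (x - s) 0 ≤ (Iic s).indicator (fun _ => s - u) x := by
  by_cases hx : x ≤ s
  · rw [indicator_of_mem (mem_Iic.2 hx), min_eq_left (by linarith), min_eq_left (by linarith)]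
    linarith
  · rw [indicator_of_notMem (mt mem_Iic.1 hx), sub_nonpos]
    exact min_le_min_right 0 (by linarith)

lemma quantileObjective_sub_bounds {μ : Measure ℝ} [IsFiniteMeasure μ]
    (hμ : Integrable (fun x => x) μ) {τ : ℝ} (hτ : 0 < τ) {s u : ℝ} (hsu : s ≤ u) :
    (u - s) * (1 - μ.real (Iio u) / τ) ≤ quantileObjective μ τ u - quantileObjective μ τ s ∧
      quantileObjective μ τ u - quantileObjective μ τ s ≤ (u - s) * (1 - μ.real (Iic s) / τ) := by
  have hint : Integrable (fun x => min (x - u) 0 - min (x - s) 0) μ :=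
    (integrable_min_sub_zero hμ u).sub (integrable_min_sub_zero hμ s)
  have hdiff : quantileObjective μ τ u - quantileObjective μ τ s =
      (u - s) + 1 / τ * ∫ x, (min (x - u) 0 - min (x - s) 0) ∂μ := by
    rw [integral_sub (integrable_min_sub_zero hμ u) (integrable_min_sub_zero hμ s),
      quantileObjective, quantileObjective]
    ring
  have hlow := integral_mono ((integrable_const (s - u)).indicator measurableSet_Iio) hint
    (indicator_Iio_le_min_sub_zero_sub hsu)
  have hupp := integral_mono hint ((integrable_const (s - u)).indicator measurableSet_Iic)
    (min_sub_zero_sub_le_indicator_Iic hsu)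
  rw [integral_indicator_const _ measurableSet_Iio, smul_eq_mul] at hlow
  rw [integral_indicator_const _ measurableSet_Iic, smul_eq_mul] at hupp
  rw [hdiff]
  constructor
  · calc (u - s) * (1 - μ.real (Iio u) / τ) = (u - s) + 1 / τ * (μ.real (Iio u) * (s - u)) := by
          ring
      _ ≤ _ := by gcongr
  · calc _ ≤ (u - s) + 1 / τ * (μ.real (Iic s) * (s - u)) := by gcongr
      _ = (u - s) * (1 - μ.real (Iic s) / τ) := by ring

section
variable {μ : Measure ℝ} [IsProbabilityMeasure μ]

lemma measureReal_Iio_eq_leftLim_cdf (t : ℝ) : μ.real (Iio t) = Function.leftLim (cdf μ) t := by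
  conv_lhs => rw [← measure_cdf μ]
  rw [measureReal_def, StieltjesFunction.measure_Iio _ (tendsto_cdf_atBot μ), sub_zero,
    ENNReal.toReal_ofReal ((cdf_nonneg μ _).trans ((monotone_cdf μ).le_leftLim (sub_one_lt t)))]

lemma measureReal_Iio_le_of_forall_lt {t c : ℝ} (h : ∀ s < t, μ.real (Iic s) ≤ c) :
    μ.real (Iio t) ≤ c := by
  rw [measureReal_Iio_eq_leftLim_cdf]
  refine le_of_tendsto ((monotone_cdf μ).tendsto_leftLim t) ?_
  filter_upwards [self_mem_nhdsWithin] with s hs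
  rw [cdf_eq_real]
  exact h s hs

lemma le_measureReal_Iic_of_forall_gt {t c : ℝ} (h : ∀ s > t, c ≤ μ.real (Iio s)) :
    c ≤ μ.real (Iic t) := by
  rw [← cdf_eq_real]
  refine ge_of_tendsto (((cdf μ).right_continuous t).mono Ioi_subset_Ici_self) ?_
  filter_upwards [self_mem_nhdsWithin] with s hs
  rw [cdf_eq_real]
  exact (h s hs).trans (measureReal_mono Iio_subset_Iic_self)

theorem forall_quantileObjective_le_iff (hμ : Integrable (fun x => x) μ) {τ : ℝ} (hτ : 0 < τ)
    (t : ℝ) :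
    (∀ s, quantileObjective μ τ s ≤ quantileObjective μ τ t) ↔
      μ.real (Iio t) ≤ τ ∧ τ ≤ μ.real (Iic t) := by
  have one_sub_div_nonneg (a : ℝ) : 0 ≤ 1 - a / τ ↔ a ≤ τ := by rw [sub_nonneg, div_le_one hτ]
  have one_sub_div_nonpos (a : ℝ) : 1 - a / τ ≤ 0 ↔ τ ≤ a := by rw [sub_nonpos, one_le_div hτ]
  constructor
  · intro hmax
    refine ⟨measureReal_Iio_le_of_forall_lt fun s hst => ?_,
      le_measureReal_Iic_of_forall_gt fun s hts => ?_⟩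
    · have := (quantileObjective_sub_bounds hμ hτ hst.le).2
      rw [← one_sub_div_nonneg, ← mul_le_mul_iff_right₀ (sub_pos.2 hst), mul_zero]
      linarith [hmax s]
    · have := (quantileObjective_sub_bounds hμ hτ hts.le).1
      rw [← one_sub_div_nonpos, ← mul_le_mul_iff_right₀ (sub_pos.2 hts), mul_zero]
      linarith [hmax s]
  · rintro ⟨hlt, hle⟩ s
    rcases le_total s t with hst | hts
    · have := (quantileObjective_sub_bounds hμ hτ hst).1
      have := mul_nonneg (sub_nonneg.2 hst) ((one_sub_div_nonneg _).2 hlt)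
      linarith
    · have := (quantileObjective_sub_bounds hμ hτ hts).2
      have := mul_nonpos_of_nonneg_of_nonpos (sub_nonneg.2 hts) ((one_sub_div_nonpos _).2 hle)
      linarith

end

lemma quantileObjective_map {Ω : Type*} [MeasurableSpace Ω] {P : Measure Ω}
    [IsProbabilityMeasure P] {Z : Ω → ℝ} (hZ : Integrable Z P) (τ u : ℝ) :
    quantileObjective (P.map Z) τ u = ∫ ω, (u + 1 / τ * min (Z ω - u) 0) ∂P := by
  rw [integral_add (integrable_const u) ((integrable_min_sub_zero hZ u).const_mul _),
    integral_const_mul, quantileObjective, integral_map hZ.aemeasurable (by fun_prop)]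
  simp

theorem stmt_11_general {Ω : Type*} [MeasurableSpace Ω] (P : Measure Ω)
    [IsProbabilityMeasure P] (Z : Ω → ℝ) (hZ : Integrable Z P)
    (N : ℕ) (w : Fin N → ℝ) (hw : ∀ i, 0 < w i)
    (τ : Fin N → ℝ) (hτ : ∀ i, 0 < τ i ∧ τ i < 1)
    (H : (Fin N → ℝ) → ℝ)
    (hH : H = fun q => ∫ ω, ∑ i, w i * (q i + (1 / τ i) * min (Z ω - q i) 0) ∂P)
    (qstar : Fin N → ℝ) :
    (∀ q : Fin N → ℝ, H q ≤ H qstar) ↔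
      (∀ i, (P {ω | Z ω < qstar i}).toReal ≤ τ i ∧
        τ i ≤ (P {ω | Z ω ≤ qstar i}).toReal) := by
  subst hH
  have := Measure.isProbabilityMeasure_map hZ.aemeasurable
  have hZ_map : Integrable (fun x => x) (P.map Z) :=
    (integrable_map_measure aestronglyMeasurable_id hZ.aemeasurable).2 hZ
  have hsep (q : Fin N → ℝ) : ∫ ω, ∑ i, w i * (q i + 1 / τ i * min (Z ω - q i) 0) ∂P =
      ∑ i, w i * quantileObjective (P.map Z) (τ i) (q i) := by
    rw [integral_finsetSum _ fun i _ => ?_]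
    · simp_rw [integral_const_mul, quantileObjective_map hZ]
    · exact ((integrable_const _).add ((integrable_min_sub_zero hZ _).const_mul _)).const_mul _
  have hIio (t : ℝ) : (P.map Z).real (Iio t) = (P {ω | Z ω < t}).toReal :=
    map_measureReal_apply_of_aemeasurable hZ.aemeasurable measurableSet_Iio
  have hIic (t : ℝ) : (P.map Z).real (Iic t) = (P {ω | Z ω ≤ t}).toReal :=
    map_measureReal_apply_of_aemeasurable hZ.aemeasurable measurableSet_Iic
  simp only [hsep, forall_sum_apply_le_iff (fun i u => w i * quantileObjective (P.map Z) (τ i) u),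
    mul_le_mul_iff_right₀ (hw _), forall_quantileObjective_le_iff hZ_map (hτ _).1, hIio, hIic]

/-- Identification of the maximizers of `q ↦ E[h_q(Z)]` in Theorem 2: with
positive weights `w i` and levels `τ i ∈ (0,1)`, a vector `q*` maximizes
`H q = E[∑ i, w i (q i + (1/τ i)(Z − q i)⁻)]` iff each `q* i` is a
`τ i`-quantile of `Z`. -/
theorem stmt_11 {Ω : Type*} [MeasurableSpace Ω] (P : Measure Ω)
    [IsProbabilityMeasure P] (Z : Ω → ℝ) (hZ : Integrable Z P)
    (N : ℕ) (hN : 1 ≤ N) (w : Fin N → ℝ) (hw : ∀ i, 0 < w i)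
    (τ : Fin N → ℝ) (hτ : ∀ i, 0 < τ i ∧ τ i < 1)
    (H : (Fin N → ℝ) → ℝ)
    (hH : H = fun q => ∫ ω, ∑ i, w i * (q i + (1 / τ i) * min (Z ω - q i) 0) ∂P)
    (qstar : Fin N → ℝ) :
    (∀ q : Fin N → ℝ, H q ≤ H qstar) ↔
      (∀ i, (P {ω | Z ω < qstar i}).toReal ≤ τ i ∧
        τ i ≤ (P {ω | Z ω ≤ qstar i}).toReal) :=
  stmt_11_general P Z hZ N w hw τ hτ H hH qstar
end
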